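/- arXiv:1206.1164 — 3 statements merged into one kernel-verified Lean document; each statement's English description precedes it below -/
import Mathlib

section
/- Let Ω ⊆ ℝᴺ be a nonempty bounded open set, and let V : ℝ → ℝ be differentiable with strictly monotone increasing derivative V′ (i.e. V is strictly convex). Suppose φ₁, φ₂ : ℝᴺ → ℝ are continuous on the closure of Ω, twice continuously differentiable on Ω, and satisfy Δφᵢ(x) = V′(φᵢ(x)) for all x ∈ Ω, i = 1, 2. If φ₁ = φ₂ on the topological frontier of Ω, then φ₁ = φ₂ on the closure of Ω. -/
/-!
At an interior maximum of a C² function every pure second derivative is nonpositive, so its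
Laplacian is too. If `φ₁ > φ₂` somewhere, the continuous function `φ₁ - φ₂` attains a positive
maximum on the compact set `closure Ω`, and since it vanishes on the frontier this maximum lies
in `Ω`. There `Δ(φ₁ - φ₂) ≤ 0`, whereas the equation and strict monotonicity of `V'` give
`Δ(φ₁ - φ₂) = V'(φ₁) - V'(φ₂) > 0`. By symmetry `φ₁ = φ₂`.
-/

/-- The Laplacian of a function on Euclidean space: the sum of its second
partial derivatives along the standard basis directions. -/
noncomputable def laplacian {n : ℕ} (f : EuclideanSpace ℝ (Fin n) → ℝ)
    (x : EuclideanSpace ℝ (Fin n)) : ℝ :=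
  ∑ i : Fin n,
    fderiv ℝ (fderiv ℝ f) x (EuclideanSpace.single i 1) (EuclideanSpace.single i 1)

open Filter Topology

theorem IsLocalMax.deriv_deriv_nonpos {g : ℝ → ℝ} {t : ℝ} (hmax : IsLocalMax g t)
    (hc : ContinuousAt g t) : deriv (deriv g) t ≤ 0 := by
  by_contra! hpos
  -- The sufficient second-derivative test would make `t` a local minimum as well, so `g` would
  -- be locally constant.
  have hmin : IsLocalMin g t := isLocalMin_of_deriv_deriv_pos hpos hmax.deriv_eq_zero hc
  have hconst : g =ᶠ[𝓝 t] fun _ => g t := by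
    filter_upwards [hmax, hmin] with s hs₁ hs₂ using le_antisymm hs₁ hs₂
  have hzero : deriv (deriv g) t = 0 := by
    rw [hconst.deriv.deriv_eq]
    simp
  exact hpos.ne' hzero

theorem IsLocalMax.fderiv_fderiv_apply_self_nonpos {E : Type*} [NormedAddCommGroup E]
    [NormedSpace ℝ E] {u : E → ℝ} {x : E} (hmax : IsLocalMax u x) (hu : ContDiffAt ℝ 2 u x)
    (v : E) : fderiv ℝ (fderiv ℝ u) x v v ≤ 0 := by
  set line : ℝ → E := fun t => x + t • v
  have hline : ∀ t, HasDerivAt line v t := fun t => by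
    simpa only [one_smul] using ((hasDerivAt_id' t).smul_const v).const_add x
  have hline0 : line 0 = x := by simp [line]
  have hline_tendsto : Tendsto line (𝓝 0) (𝓝 x) := hline0 ▸ (hline 0).continuousAt.tendsto
  have hdiff : ∀ᶠ y in 𝓝 x, DifferentiableAt ℝ u y :=
    (hu.eventually (by simp)).mono fun y hy => hy.differentiableAt (by simp)
  have hfirst : deriv (u ∘ line) =ᶠ[𝓝 0] fun t => fderiv ℝ u (line t) v := by
    filter_upwards [hline_tendsto.eventually hdiff] with t ht
    exact (ht.hasFDerivAt.comp_hasDerivAt t (hline t)).deriv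
  have hsecond : HasDerivAt (fun t => fderiv ℝ u (line t) v) (fderiv ℝ (fderiv ℝ u) x v v) 0 :=
    (ContinuousLinearMap.apply ℝ ℝ v).hasFDerivAt.comp_hasDerivAt 0 <|
      ((hu.fderiv_right le_rfl).differentiableAt one_ne_zero).hasFDerivAt.comp_hasDerivAt_of_eq
        0 (hline 0) hline0.symm
  have hmax_line : IsLocalMax (u ∘ line) 0 := 
    IsMaxFilter.comp_tendsto (l := 𝓝 x) (by rwa [hline0]) hline_tendsto
  rw [← hsecond.deriv, ← hfirst.deriv_eq]
  exact hmax_line.deriv_deriv_nonpos (hu.continuousAt.comp_of_eq (hline 0).continuousAt hline0)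

section Laplacian

variable {n : ℕ} {f g : EuclideanSpace ℝ (Fin n) → ℝ} {x : EuclideanSpace ℝ (Fin n)}

theorem IsLocalMax.laplacian_nonpos (hmax : IsLocalMax f x) (hf : ContDiffAt ℝ 2 f x) :
    laplacian f x ≤ 0 :=
  Finset.sum_nonpos fun _ _ => hmax.fderiv_fderiv_apply_self_nonpos hf _

theorem laplacian_sub (hf : ContDiffAt ℝ 2 f x) (hg : ContDiffAt ℝ 2 g x) :
    laplacian (f - g) x = laplacian f x - laplacian g x := by
  have hfderiv : fderiv ℝ (f - g) =ᶠ[𝓝 x] fderiv ℝ f - fderiv ℝ g := by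
    filter_upwards [hf.eventually (by simp), hg.eventually (by simp)] with y hfy hgy
    exact fderiv_sub (hfy.differentiableAt (by simp)) (hgy.differentiableAt (by simp))
  have hsecond : fderiv ℝ (fderiv ℝ (f - g)) x =
      fderiv ℝ (fderiv ℝ f) x - fderiv ℝ (fderiv ℝ g) x := by
    rw [hfderiv.fderiv_eq]
    exact fderiv_sub ((hf.fderiv_right le_rfl).differentiableAt one_ne_zero)
      ((hg.fderiv_right le_rfl).differentiableAt one_ne_zero)
  simp only [laplacian, hsecond, sub_apply, Finset.sum_sub_distrib]

end Laplacian

theorem IsOpen.exists_mem_isLocalMax_pos_of_frontier_nonpos {X : Type*} [MetricSpace X]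
    [ProperSpace X] {Ω : Set X} (hopen : IsOpen Ω) (hbdd : Bornology.IsBounded Ω) {u : X → ℝ}
    (hu : ContinuousOn u (closure Ω)) (hfrontier : ∀ x ∈ frontier Ω, u x ≤ 0)
    {z : X} (hz : z ∈ closure Ω) (hpos : 0 < u z) :
    ∃ x ∈ Ω, IsLocalMax u x ∧ 0 < u x := by
  obtain ⟨x, hx, hmax⟩ := hbdd.isCompact_closure.exists_isMaxOn ⟨z, hz⟩ hu
  have hux : 0 < u x := hpos.trans_le (hmax hz)
  have hxΩ : x ∈ Ω := by
    by_contra hxΩ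
    have hx_frontier : x ∈ frontier Ω := by rw [hopen.frontier_eq]; exact ⟨hx, hxΩ⟩
    exact (hfrontier x hx_frontier).not_gt hux
  exact ⟨x, hxΩ, mem_of_superset (hopen.mem_nhds hxΩ) fun y hy => hmax (subset_closure hy), hux⟩

theorem laplacian_comparison_principle {N : ℕ} {Ω : Set (EuclideanSpace ℝ (Fin N))}
    (hopen : IsOpen Ω) (hbdd : Bornology.IsBounded Ω) {F : ℝ → ℝ} (hF : StrictMono F)
    {φ₁ φ₂ : EuclideanSpace ℝ (Fin N) → ℝ}
    (hc₁ : ContinuousOn φ₁ (closure Ω)) (hc₂ : ContinuousOn φ₂ (closure Ω))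
    (hd₁ : ContDiffOn ℝ 2 φ₁ Ω) (hd₂ : ContDiffOn ℝ 2 φ₂ Ω)
    (hsub : ∀ x ∈ Ω, F (φ₁ x) ≤ laplacian φ₁ x) (hsuper : ∀ x ∈ Ω, laplacian φ₂ x ≤ F (φ₂ x))
    (hbc : ∀ x ∈ frontier Ω, φ₁ x ≤ φ₂ x) :
    ∀ x ∈ closure Ω, φ₁ x ≤ φ₂ x := by
  intro z hz
  by_contra! hlt
  obtain ⟨x, hxΩ, hmax, hpos⟩ := hopen.exists_mem_isLocalMax_pos_of_frontier_nonpos hbdd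
    (hc₁.sub hc₂) (fun x hx => sub_nonpos.2 (hbc x hx)) hz (sub_pos.2 hlt)
  have hx₁ := hd₁.contDiffAt (hopen.mem_nhds hxΩ)
  have hx₂ := hd₂.contDiffAt (hopen.mem_nhds hxΩ)
  have hlap : laplacian φ₁ x - laplacian φ₂ x ≤ 0 :=
    laplacian_sub hx₁ hx₂ ▸ hmax.laplacian_nonpos (hx₁.sub hx₂)
  have hF_lt : F (φ₂ x) < F (φ₁ x) := hF (sub_pos.1 hpos)
  linarith [hsub x hxΩ, hsuper x hxΩ]

theorem dirichlet_uniqueness_strictly_convex_potential_general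
    {N : ℕ} (Ω : Set (EuclideanSpace ℝ (Fin N)))
    (hbdd : Bornology.IsBounded Ω) (hopen : IsOpen Ω)
    (V : ℝ → ℝ) (hV' : StrictMono (deriv V))
    (φ₁ φ₂ : EuclideanSpace ℝ (Fin N) → ℝ)
    (hc₁ : ContinuousOn φ₁ (closure Ω)) (hc₂ : ContinuousOn φ₂ (closure Ω))
    (hd₁ : ContDiffOn ℝ 2 φ₁ Ω) (hd₂ : ContDiffOn ℝ 2 φ₂ Ω)
    (heq₁ : ∀ x ∈ Ω, laplacian φ₁ x = deriv V (φ₁ x))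
    (heq₂ : ∀ x ∈ Ω, laplacian φ₂ x = deriv V (φ₂ x))
    (hbc : ∀ x ∈ frontier Ω, φ₁ x = φ₂ x) :
    ∀ x ∈ closure Ω, φ₁ x = φ₂ x := by
  intro x hx
  exact le_antisymm
    (laplacian_comparison_principle hopen hbdd hV' hc₁ hc₂ hd₁ hd₂
      (fun y hy => (heq₁ y hy).ge) (fun y hy => (heq₂ y hy).le) (fun y hy => (hbc y hy).le) x hx)
    (laplacian_comparison_principle hopen hbdd hV' hc₂ hc₁ hd₂ hd₁
      (fun y hy => (heq₂ y hy).ge) (fun y hy => (heq₁ y hy).le) (fun y hy => (hbc y hy).ge) x hx)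

/-- Dirichlet uniqueness for the scalar field toy model: two solutions of
`Δφ = V'(φ)` on a bounded open set, for a strictly convex potential `V`, that
agree on the boundary agree everywhere on the closure. -/
theorem dirichlet_uniqueness_strictly_convex_potential
    {N : ℕ} (Ω : Set (EuclideanSpace ℝ (Fin N)))
    (hne : Ω.Nonempty) (hbdd : Bornology.IsBounded Ω) (hopen : IsOpen Ω)
    (V : ℝ → ℝ) (hV : Differentiable ℝ V) (hV' : StrictMono (deriv V))
    (φ₁ φ₂ : EuclideanSpace ℝ (Fin N) → ℝ)
    (hc₁ : ContinuousOn φ₁ (closure Ω)) (hc₂ : ContinuousOn φ₂ (closure Ω))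
    (hd₁ : ContDiffOn ℝ 2 φ₁ Ω) (hd₂ : ContDiffOn ℝ 2 φ₂ Ω)
    (heq₁ : ∀ x ∈ Ω, laplacian φ₁ x = deriv V (φ₁ x))
    (heq₂ : ∀ x ∈ Ω, laplacian φ₂ x = deriv V (φ₂ x))
    (hbc : ∀ x ∈ frontier Ω, φ₁ x = φ₂ x) :
    ∀ x ∈ closure Ω, φ₁ x = φ₂ x :=
  dirichlet_uniqueness_strictly_convex_potential_general Ω hbdd hopen V hV' φ₁ φ₂ hc₁ hc₂ hd₁ hd₂
    heq₁ heq₂ hbc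
end

section
/- Let n ≥ 1, let f be a real n×n positive definite matrix, and let χ ∈ ℝⁿ. Define the (n+1)×(n+1) real block matrix Φ = [[(det f)⁻¹, −(det f)⁻¹ χᵀ], [−(det f)⁻¹ χ, f + (det f)⁻¹ χχᵀ]], i.e. Φ₀₀ = (det f)⁻¹, Φ₀ᵢ = Φᵢ₀ = −(det f)⁻¹ χᵢ, and Φᵢⱼ = fᵢⱼ + (det f)⁻¹ χᵢχⱼ for 1 ≤ i, j ≤ n. Then Φ is symmetric, positive definite, and det Φ = 1. -/
/-!
With `c = (det f)⁻¹`, the top-left entry `c` of `Φ` is positive and its Schur complement is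
`f + c χχᵀ - (-c χ) c⁻¹ (-c χᵀ) = f`. Hence `Φ` is positive semidefinite exactly when `f` is, and
`det Φ = c · det f = 1`; a positive semidefinite matrix with nonzero determinant is positive
definite.
-/

open Matrix

section Field

variable {K : Type*} [Field K] {m : Type*}

def maisonMatrix (c : K) (f : Matrix m m K) (χ : m → K) : Matrix (Unit ⊕ m) (Unit ⊕ m) K :=
  fromBlocks (of fun _ _ => c) (of fun _ j => -c * χ j) (of fun i _ => -c * χ i)
    (of fun i j => f i j + c * χ i * χ j)

theorem maisonMatrix_schurComplement (c : K) (f : Matrix m m K) (χ : m → K) :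
    (of fun i j => f i j + c * χ i * χ j : Matrix m m K) -
        (of fun i _ => -c * χ i : Matrix m Unit K) * (of fun _ _ => c : Matrix Unit Unit K)⁻¹ *
          (of fun _ j => -c * χ j : Matrix Unit m K) = f := by
  ext i j
  simp only [Matrix.sub_apply, Matrix.mul_apply, inv_subsingleton, Ring.inverse_eq_inv', of_apply,
    Fintype.sum_unique, diagonal_apply_eq]
  linear_combination -(χ i * χ j) * mul_inv_mul_cancel c

theorem det_maisonMatrix [Fintype m] [DecidableEq m] (c : K) (f : Matrix m m K) (χ : m → K) :
    (maisonMatrix c f χ).det = c * f.det := by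
  rcases eq_or_ne c 0 with rfl | hc
  · rw [zero_mul]
    exact det_eq_zero_of_row_eq_zero (Sum.inl ()) fun j => by cases j <;> simp [maisonMatrix]
  let := invertibleOfIsUnitDet (of fun _ _ => c : Matrix Unit Unit K) (by simpa using hc)
  rw [maisonMatrix, det_fromBlocks₁₁, invOf_eq_nonsing_inv, maisonMatrix_schurComplement,
    det_unique, of_apply]

end Field

theorem posDef_maisonMatrix {m : Type*} [Fintype m] [DecidableEq m] {c : ℝ} (hc : 0 < c)
    {f : Matrix m m ℝ} (hf : f.PosDef) (χ : m → ℝ) : (maisonMatrix c f χ).PosDef := by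
  have hA : (of fun _ _ => c : Matrix Unit Unit ℝ).PosDef := by
    convert posDef_diagonal_iff.2 fun _ : Unit => hc
    ext; simp
  let := invertibleOfIsUnitDet _ hA.det_pos.ne'.isUnit
  have hB : (of fun _ j => -c * χ j : Matrix Unit m ℝ)ᴴ = of fun i _ => -c * χ i := by
    ext; simp
  have hsemi : (maisonMatrix c f χ).PosSemidef := by
    rw [maisonMatrix, ← hB, PosDef.fromBlocks₁₁ _ _ hA, hB, maisonMatrix_schurComplement]
    exact hf.posSemidef
  exact hsemi.posDef_iff_det_ne_zero.2 (by rw [det_maisonMatrix]; exact (mul_pos hc hf.det_pos).ne')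

theorem maison_matrix_posDef_det_one_general
    {n : ℕ}
    (f : Matrix (Fin n) (Fin n) ℝ) (hf : f.PosDef) (χ : Fin n → ℝ) :
    ∀ Φ : Matrix (Unit ⊕ Fin n) (Unit ⊕ Fin n) ℝ,
      Φ = Matrix.fromBlocks
        (Matrix.of fun _ _ => (f.det)⁻¹)
        (Matrix.of fun _ j => -(f.det)⁻¹ * χ j)
        (Matrix.of fun i _ => -(f.det)⁻¹ * χ i)
        (Matrix.of fun i j => f i j + (f.det)⁻¹ * χ i * χ j) →
      Φ.IsSymm ∧ Φ.PosDef ∧ Φ.det = 1 := by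
  rintro Φ rfl
  have hpos : (maisonMatrix (f.det)⁻¹ f χ).PosDef := posDef_maisonMatrix (inv_pos.2 hf.det_pos) hf χ
  refine ⟨isHermitian_iff_isSymm.1 hpos.isHermitian, hpos, ?_⟩
  rw [← maisonMatrix, det_maisonMatrix, inv_mul_cancel₀ hf.det_pos.ne']

/-- Maison's matrix `Φ`, built from a positive definite block `f` and the twist
potentials `χ`, is symmetric, positive definite, and has determinant 1. -/
theorem maison_matrix_posDef_det_one
    {n : ℕ} (hn : 1 ≤ n)
    (f : Matrix (Fin n) (Fin n) ℝ) (hf : f.PosDef) (χ : Fin n → ℝ) :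
    ∀ Φ : Matrix (Unit ⊕ Fin n) (Unit ⊕ Fin n) ℝ,
      Φ = Matrix.fromBlocks
        (Matrix.of fun _ _ => (f.det)⁻¹)
        (Matrix.of fun _ j => -(f.det)⁻¹ * χ j)
        (Matrix.of fun i _ => -(f.det)⁻¹ * χ i)
        (Matrix.of fun i j => f i j + (f.det)⁻¹ * χ i * χ j) →
      Φ.IsSymm ∧ Φ.PosDef ∧ Φ.det = 1 :=
  maison_matrix_posDef_det_one_general f hf χ
end

section
/- Let n ≥ 1 and let H = {(r,z) ∈ ℝ² : r > 0}. Suppose Φ₀, Φ₁ : ℝ² → M_n(ℝ) are matrix-valued functions whose entries are twice continuously differentiable on H, such that Φ₀(r,z) and Φ₁(r,z) are symmetric positive definite for every (r,z) ∈ H, and each Φ = Φ₀, Φ₁ satisfies the reduced sigma-model field equation ∂_r( r·Φ⁻¹ ∂_r Φ ) + ∂_z( r·Φ⁻¹ ∂_z Φ ) = 0 on H (an equality of matrix-valued functions, where ∂_r, ∂_z denote partial derivatives taken entrywise). Then the scalar function σ(r,z) = Tr( Φ₀(r,z)⁻¹ Φ₁(r,z) ) satisfies the subharmonicity inequality ∂²_r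 σ + (1/r) ∂_r σ + ∂²_z σ ≥ 0 at every point of H. (This is the content of the Mazur identity used in the uniqueness theorem for rotating black holes.) -/
open Matrix

/-- Partial derivative in the first (`r`) coordinate. -/
noncomputable def pdR (F : ℝ × ℝ → ℝ) (p : ℝ × ℝ) : ℝ :=
  fderiv ℝ F p (1, 0)

/-- Partial derivative in the second (`z`) coordinate. -/
noncomputable def pdZ (F : ℝ × ℝ → ℝ) (p : ℝ × ℝ) : ℝ :=
  fderiv ℝ F p (0, 1)

/-- Entrywise partial derivative in `r` of a matrix-valued function. -/
noncomputable def mpdR {n : ℕ} (Φ : ℝ × ℝ → Matrix (Fin n) (Fin n) ℝ)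
    (p : ℝ × ℝ) : Matrix (Fin n) (Fin n) ℝ :=
  Matrix.of fun i j => pdR (fun q => Φ q i j) p

/-- Entrywise partial derivative in `z` of a matrix-valued function. -/
noncomputable def mpdZ {n : ℕ} (Φ : ℝ × ℝ → Matrix (Fin n) (Fin n) ℝ)
    (p : ℝ × ℝ) : Matrix (Fin n) (Fin n) ℝ :=
  Matrix.of fun i j => pdZ (fun q => Φ q i j) p

/-- The reduced sigma-model field equation
`∂_r(r Φ⁻¹ ∂_r Φ) + ∂_z(r Φ⁻¹ ∂_z Φ) = 0` on the upper half-plane `{r > 0}`. -/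
def SatisfiesSigmaModelEq {n : ℕ} (Φ : ℝ × ℝ → Matrix (Fin n) (Fin n) ℝ) : Prop :=
  ∀ p : ℝ × ℝ, 0 < p.1 →
    mpdR (fun q => q.1 • ((Φ q)⁻¹ * mpdR Φ q)) p +
      mpdZ (fun q => q.1 • ((Φ q)⁻¹ * mpdZ Φ q)) p = 0

/-! With `X = Φ₀⁻¹ Φ₁` and the currents `J = Φ⁻¹ ∂Φ`, one has `∂σ = tr (X (J₁ - J₀))`, and since
`Φ₀`, `Φ₁` and their derivatives are symmetric, `∂X = Φ₀⁻¹ (J₁ - J₀)ᵀ Φ₁`. Differentiating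
`r ∂σ = tr (X · r (J₁ - J₀))` once more, the field equations kill the divergence of
`r (J₁ - J₀)`, and what is left is `r ∑ tr (Φ₀⁻¹ Kᵀ Φ₁ K)` with `K = J₁ - J₀`: a sum of traces
of products of two positive semidefinite matrices, hence nonnegative. Dividing
`∂_r (r ∂_r σ) + ∂_z (r ∂_z σ) = r (∂²_r σ + ∂²_z σ) + ∂_r σ` by `r` gives the claim. -/

open Filter Topology

-- Every norm on matrices gives the same derivatives; the operator norm makes them a normed algebra.
attribute [local instance] Matrix.linftyOpNormedRing Matrix.linftyOpNormedAlgebra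

section MatrixAlgebra

variable {ι : Type*} [Fintype ι]

open scoped MatrixOrder ComplexOrder in
theorem Matrix.PosSemidef.trace_mul_nonneg {𝕜 : Type*} [RCLike 𝕜] {A B : Matrix ι ι 𝕜}
    (hA : A.PosSemidef) (hB : B.PosSemidef) : 0 ≤ (A * B).trace := by
  classical
  obtain ⟨C, rfl⟩ := CStarAlgebra.nonneg_iff_eq_star_mul_self.mp hA.nonneg
  rw [mul_assoc, trace_mul_comm, mul_assoc, ← mul_assoc]
  simpa [star_eq_conjTranspose] using (hB.mul_mul_conjTranspose_same C).trace_nonneg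

theorem Matrix.trace_mul_transpose_mul_mul_nonneg {A B : Matrix ι ι ℝ}
    (hA : A.PosSemidef) (hB : B.PosSemidef) (K : Matrix ι ι ℝ) :
    0 ≤ (A * Kᵀ * B * K).trace := by
  rw [mul_assoc, mul_assoc]
  simpa [mul_assoc] using hA.trace_mul_nonneg (hB.conjTranspose_mul_mul_same K)

variable [DecidableEq ι]

theorem Matrix.inv_mul_sub_inv_mul_inv_mul_eq_inv_mul_transpose_mul {a b da db : Matrix ι ι ℝ}
    (hb : IsUnit b) (ha : aᵀ = a) (hb' : bᵀ = b) (hda : daᵀ = da) (hdb : dbᵀ = db) :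
    a⁻¹ * db - a⁻¹ * da * a⁻¹ * b = a⁻¹ * (b⁻¹ * db - a⁻¹ * da)ᵀ * b := by
  have hbb : b⁻¹ * b = 1 := nonsing_inv_mul b ((isUnit_iff_isUnit_det b).mp hb)
  rw [transpose_sub, transpose_mul, transpose_mul, transpose_nonsing_inv, transpose_nonsing_inv,
    ha, hb', hda, hdb, mul_sub, sub_mul]
  simp only [mul_assoc, hbb, mul_one]

theorem Matrix.trace_inv_mul_sub_inv_mul_inv_mul {a b da db : Matrix ι ι ℝ} (hb : IsUnit b) :
    (a⁻¹ * db - a⁻¹ * da * a⁻¹ * b).trace = (a⁻¹ * b * (b⁻¹ * db - a⁻¹ * da)).trace := by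
  have hbb : b * b⁻¹ = 1 := mul_nonsing_inv b ((isUnit_iff_isUnit_det b).mp hb)
  rw [mul_sub, trace_sub, trace_sub, mul_assoc a⁻¹ b, ← mul_assoc b, hbb, one_mul,
    mul_assoc, mul_assoc, trace_mul_cycle]
  simp only [mul_assoc]

end MatrixAlgebra

section Calculus

variable {E : Type*} [NormedAddCommGroup E] [NormedSpace ℝ E]
  {ι : Type*} [Fintype ι] [DecidableEq ι] {F G : E → Matrix ι ι ℝ} {x : E}

theorem Matrix.of_fderiv_entry (hF : DifferentiableAt ℝ F x) (v : E) :
    Matrix.of (fun i j => fderiv ℝ (fun y => F y i j) x v) = fderiv ℝ F x v := by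
  ext i j
  have h := ((Matrix.entryLinearMap ℝ ℝ i j).toContinuousLinearMap.hasFDerivAt.comp x
    hF.hasFDerivAt).fderiv
  exact congrArg (· v) h

theorem Matrix.contDiffOn_of_entries {s : Set E} {k : WithTop ℕ∞}
    (h : ∀ i j, ContDiffOn ℝ k (fun y => F y i j) s) : ContDiffOn ℝ k F s := by
  let ofCLE := (Matrix.ofLinearEquiv ℝ (m := ι) (n := ι) (α := ℝ)).toContinuousLinearEquiv
  exact ofCLE.contDiff.comp_contDiffOn (contDiffOn_pi.2 fun i => contDiffOn_pi.2 (h i))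

theorem transpose_fderiv_of_eventually_transpose_eq (hF : DifferentiableAt ℝ F x)
    (hsymm : ∀ᶠ y in 𝓝 x, (F y)ᵀ = F y) (v : E) :
    (fderiv ℝ F x v)ᵀ = fderiv ℝ F x v := by
  let transposeCLM := (Matrix.transposeLinearEquiv ι ι ℝ ℝ).toLinearMap.toContinuousLinearMap
  have h : HasFDerivAt (fun y => (F y)ᵀ) (transposeCLM.comp (fderiv ℝ F x)) x :=
    transposeCLM.hasFDerivAt.comp x hF.hasFDerivAt
  exact (congrArg (· v) (h.congr_of_eventuallyEq (hsymm.mono fun _ hy => hy.symm)).fderiv).symm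

theorem fderiv_trace_apply (hF : DifferentiableAt ℝ F x) (v : E) :
    fderiv ℝ (fun y => (F y).trace) x v = (fderiv ℝ F x v).trace := by
  have h := ((Matrix.traceLinearMap ι ℝ ℝ).toContinuousLinearMap.hasFDerivAt.comp x
    hF.hasFDerivAt).fderiv
  exact congrArg (· v) h

theorem fderiv_matrix_sub_apply (hF : DifferentiableAt ℝ F x) (hG : DifferentiableAt ℝ G x)
    (v : E) : fderiv ℝ (fun y => F y - G y) x v = fderiv ℝ F x v - fderiv ℝ G x v := by
  have h := (hF.hasFDerivAt.sub hG.hasFDerivAt).fderiv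
  exact congrArg (· v) h

theorem fderiv_matrix_mul_apply (hF : DifferentiableAt ℝ F x) (hG : DifferentiableAt ℝ G x)
    (v : E) :
    fderiv ℝ (fun y => F y * G y) x v = F x * fderiv ℝ G x v + fderiv ℝ F x v * G x := by
  have h := (hF.hasFDerivAt.mul' hG.hasFDerivAt).fderiv
  exact congrArg (· v) h

theorem DifferentiableAt.matrix_inv (hF : DifferentiableAt ℝ F x) (hx : IsUnit (F x)) :
    DifferentiableAt ℝ (fun y => (F y)⁻¹) x := by
  simp only [Matrix.nonsing_inv_eq_ringInverse]
  exact hF.inverse hx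

theorem ContDiffAt.matrix_inv {k : WithTop ℕ∞} (hF : ContDiffAt ℝ k F x) (hx : IsUnit (F x)) :
    ContDiffAt ℝ k (fun y => (F y)⁻¹) x := by
  simp only [Matrix.nonsing_inv_eq_ringInverse]
  exact (contDiffAt_ringInverse ℝ hx.unit).comp x hF

theorem fderiv_matrix_inv_apply (hF : DifferentiableAt ℝ F x) (hx : IsUnit (F x)) (v : E) :
    fderiv ℝ (fun y => (F y)⁻¹) x v = -((F x)⁻¹ * fderiv ℝ F x v * (F x)⁻¹) := by
  have h := ((hasFDerivAt_ringInverse (𝕜 := ℝ) hx.unit).comp x hF.hasFDerivAt).fderiv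
  simp only [Matrix.nonsing_inv_eq_ringInverse]
  refine (congrArg (· v) h).trans ?_
  simp only [← Ring.inverse_unit, IsUnit.unit_spec]
  rfl

end Calculus

section MazurIdentity

variable {E : Type*} [NormedAddCommGroup E] [NormedSpace ℝ E] {ι : Type*} [Fintype ι]
  [DecidableEq ι]

noncomputable def sigmaCurrent (Φ : E → Matrix ι ι ℝ) (v x : E) : Matrix ι ι ℝ :=
  (Φ x)⁻¹ * fderiv ℝ Φ x v

variable {Φ Φ₀ Φ₁ : E → Matrix ι ι ℝ} {x : E}

theorem ContDiffAt.differentiableAt_sigmaCurrent (hΦ : ContDiffAt ℝ 2 Φ x) (hx : IsUnit (Φ x))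
    (v : E) : DifferentiableAt ℝ (sigmaCurrent Φ v) x := by
  have hderiv : ContDiffAt ℝ 1 (fun y => fderiv ℝ Φ y v) x :=
    (hΦ.fderiv_right (by norm_num)).clm_apply contDiffAt_const
  exact ((hΦ.differentiableAt two_ne_zero).matrix_inv hx).mul (hderiv.differentiableAt one_ne_zero)

theorem ContDiffAt.trace_inv_mul {k : WithTop ℕ∞} (h₀ : ContDiffAt ℝ k Φ₀ x)
    (h₁ : ContDiffAt ℝ k Φ₁ x) (hx : IsUnit (Φ₀ x)) :
    ContDiffAt ℝ k (fun y => ((Φ₀ y)⁻¹ * Φ₁ y).trace) x :=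
  (Matrix.traceLinearMap ι ℝ ℝ).toContinuousLinearMap.contDiff.contDiffAt.comp x
    ((h₀.matrix_inv hx).mul h₁)

theorem fderiv_inv_mul_apply (h₀ : DifferentiableAt ℝ Φ₀ x) (h₁ : DifferentiableAt ℝ Φ₁ x)
    (hx : IsUnit (Φ₀ x)) (v : E) :
    fderiv ℝ (fun y => (Φ₀ y)⁻¹ * Φ₁ y) x v
      = (Φ₀ x)⁻¹ * fderiv ℝ Φ₁ x v - (Φ₀ x)⁻¹ * fderiv ℝ Φ₀ x v * (Φ₀ x)⁻¹ * Φ₁ x := by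
  rw [fderiv_matrix_mul_apply (h₀.matrix_inv hx) h₁, fderiv_matrix_inv_apply h₀ hx, neg_mul,
    ← sub_eq_add_neg]

theorem fderiv_trace_inv_mul_apply (h₀ : DifferentiableAt ℝ Φ₀ x)
    (h₁ : DifferentiableAt ℝ Φ₁ x) (hx₀ : IsUnit (Φ₀ x)) (hx₁ : IsUnit (Φ₁ x)) (v : E) :
    fderiv ℝ (fun y => ((Φ₀ y)⁻¹ * Φ₁ y).trace) x v
      = ((Φ₀ x)⁻¹ * Φ₁ x * (sigmaCurrent Φ₁ v x - sigmaCurrent Φ₀ v x)).trace := by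
  rw [fderiv_trace_apply ((h₀.matrix_inv hx₀).fun_mul h₁), fderiv_inv_mul_apply h₀ h₁ hx₀,
    Matrix.trace_inv_mul_sub_inv_mul_inv_mul hx₁, sigmaCurrent, sigmaCurrent]

theorem trace_fderiv_inv_mul_mul_sigmaCurrent_sub_nonneg (h₀ : DifferentiableAt ℝ Φ₀ x)
    (h₁ : DifferentiableAt ℝ Φ₁ x) (hpos₀ : ∀ᶠ y in 𝓝 x, (Φ₀ y).PosDef)
    (hpos₁ : ∀ᶠ y in 𝓝 x, (Φ₁ y).PosDef) (v : E) :
    0 ≤ (fderiv ℝ (fun y => (Φ₀ y)⁻¹ * Φ₁ y) x v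
      * (sigmaCurrent Φ₁ v x - sigmaCurrent Φ₀ v x)).trace := by
  have hsymm {Φ : E → Matrix ι ι ℝ} (hpos : ∀ᶠ y in 𝓝 x, (Φ y).PosDef) :
      ∀ᶠ y in 𝓝 x, (Φ y)ᵀ = Φ y :=
    hpos.mono fun y hy => by simpa [conjTranspose_eq_transpose_of_trivial] using hy.isHermitian.eq
  have hx₀ := hpos₀.self_of_nhds
  have hx₁ := hpos₁.self_of_nhds
  rw [fderiv_inv_mul_apply h₀ h₁ hx₀.isUnit,
    Matrix.inv_mul_sub_inv_mul_inv_mul_eq_inv_mul_transpose_mul hx₁.isUnit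
      (hsymm hpos₀).self_of_nhds (hsymm hpos₁).self_of_nhds
      (transpose_fderiv_of_eventually_transpose_eq h₀ (hsymm hpos₀) v)
      (transpose_fderiv_of_eventually_transpose_eq h₁ (hsymm hpos₁) v)]
  exact Matrix.trace_mul_transpose_mul_mul_nonneg hx₀.inv.posSemidef hx₁.posSemidef _

/- Near `x`, `w ∂_v σ = tr (X · w (J₁ - J₀))`; differentiating this in the direction `v`, the
term in which the derivative falls on `X` is the nonnegative one. -/
theorem trace_inv_mul_mul_fderiv_smul_sigmaCurrent_sub_le (h₀ : ContDiffAt ℝ 2 Φ₀ x)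
    (h₁ : ContDiffAt ℝ 2 Φ₁ x) (hpos₀ : ∀ᶠ y in 𝓝 x, (Φ₀ y).PosDef)
    (hpos₁ : ∀ᶠ y in 𝓝 x, (Φ₁ y).PosDef) {w : E → ℝ} (hw : DifferentiableAt ℝ w x)
    (hwx : 0 ≤ w x) (v : E) :
    ((Φ₀ x)⁻¹ * Φ₁ x * (fderiv ℝ (fun y => w y • sigmaCurrent Φ₁ v y) x v
        - fderiv ℝ (fun y => w y • sigmaCurrent Φ₀ v y) x v)).trace
      ≤ fderiv ℝ (fun y => w y * fderiv ℝ (fun y => ((Φ₀ y)⁻¹ * Φ₁ y).trace) y v) x v := by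
  have hx₀ := hpos₀.self_of_nhds.isUnit
  have hx₁ := hpos₁.self_of_nhds.isUnit
  have hd₀ := h₀.differentiableAt two_ne_zero
  have hd₁ := h₁.differentiableAt two_ne_zero
  have hK₀ := hw.fun_smul (h₀.differentiableAt_sigmaCurrent hx₀ v)
  have hK₁ := hw.fun_smul (h₁.differentiableAt_sigmaCurrent hx₁ v)
  have hX : DifferentiableAt ℝ (fun y => (Φ₀ y)⁻¹ * Φ₁ y) x := (hd₀.matrix_inv hx₀).fun_mul hd₁
  have hlocal : (fun y => w y * fderiv ℝ (fun y => ((Φ₀ y)⁻¹ * Φ₁ y).trace) y v)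
      =ᶠ[𝓝 x] fun y => ((Φ₀ y)⁻¹ * Φ₁ y
        * (w y • sigmaCurrent Φ₁ v y - w y • sigmaCurrent Φ₀ v y)).trace := by
    filter_upwards [h₀.eventually (by simp), h₁.eventually (by simp), hpos₀, hpos₁]
      with y hy₀ hy₁ hpy₀ hpy₁
    rw [fderiv_trace_inv_mul_apply (hy₀.differentiableAt two_ne_zero)
      (hy₁.differentiableAt two_ne_zero) hpy₀.isUnit hpy₁.isUnit, ← smul_sub, Matrix.mul_smul,
      trace_smul, smul_eq_mul]
  rw [hlocal.fderiv_eq, fderiv_trace_apply (hX.fun_mul (hK₁.fun_sub hK₀)),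
    fderiv_matrix_mul_apply hX (hK₁.fun_sub hK₀), fderiv_matrix_sub_apply hK₁ hK₀, trace_add,
    ← smul_sub, Matrix.mul_smul, trace_smul, smul_eq_mul]
  exact le_add_of_nonneg_right (mul_nonneg hwx
    (trace_fderiv_inv_mul_mul_sigmaCurrent_sub_nonneg hd₀ hd₁ hpos₀ hpos₁ v))

end MazurIdentity

section HalfPlane

variable {n : ℕ} {Φ F G : ℝ × ℝ → Matrix (Fin n) (Fin n) ℝ} {p : ℝ × ℝ}

theorem mpdR_eq_fderiv (hF : DifferentiableAt ℝ F p) : mpdR F p = fderiv ℝ F p (1, 0) :=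
  Matrix.of_fderiv_entry hF (1, 0)

theorem mpdZ_eq_fderiv (hF : DifferentiableAt ℝ F p) : mpdZ F p = fderiv ℝ F p (0, 1) :=
  Matrix.of_fderiv_entry hF (0, 1)

theorem Filter.EventuallyEq.mpdR_eq (h : F =ᶠ[𝓝 p] G) : mpdR F p = mpdR G p := by
  ext i j
  exact congrArg (fun L : ℝ × ℝ →L[ℝ] ℝ => L (1, 0))
    (h.fun_comp fun A : Matrix (Fin n) (Fin n) ℝ => A i j).fderiv_eq

theorem Filter.EventuallyEq.mpdZ_eq (h : F =ᶠ[𝓝 p] G) : mpdZ F p = mpdZ G p := by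
  ext i j
  exact congrArg (fun L : ℝ × ℝ →L[ℝ] ℝ => L (0, 1))
    (h.fun_comp fun A : Matrix (Fin n) (Fin n) ℝ => A i j).fderiv_eq

theorem SatisfiesSigmaModelEq.fderiv_fst_smul_sigmaCurrent (heq : SatisfiesSigmaModelEq Φ)
    (hΦ : ContDiffAt ℝ 2 Φ p) (hu : IsUnit (Φ p)) (hp : 0 < p.1) :
    fderiv ℝ (fun q => q.1 • sigmaCurrent Φ (1, 0) q) p (1, 0)
      + fderiv ℝ (fun q => q.1 • sigmaCurrent Φ (0, 1) q) p (0, 1) = 0 := by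
  have hdiff : ∀ᶠ q in 𝓝 p, DifferentiableAt ℝ Φ q :=
    (hΦ.eventually (by simp)).mono fun q hq => hq.differentiableAt two_ne_zero
  have hR : (fun q => q.1 • ((Φ q)⁻¹ * mpdR Φ q))
      =ᶠ[𝓝 p] fun q => q.1 • sigmaCurrent Φ (1, 0) q :=
    hdiff.mono fun q hq => by dsimp only; rw [mpdR_eq_fderiv hq, sigmaCurrent]
  have hZ : (fun q => q.1 • ((Φ q)⁻¹ * mpdZ Φ q))
      =ᶠ[𝓝 p] fun q => q.1 • sigmaCurrent Φ (0, 1) q :=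
    hdiff.mono fun q hq => by dsimp only; rw [mpdZ_eq_fderiv hq, sigmaCurrent]
  have h := heq p hp
  rwa [hR.mpdR_eq, hZ.mpdZ_eq,
    mpdR_eq_fderiv (differentiableAt_fst.fun_smul (hΦ.differentiableAt_sigmaCurrent hu _)),
    mpdZ_eq_fderiv (differentiableAt_fst.fun_smul (hΦ.differentiableAt_sigmaCurrent hu _))] at h

theorem fderiv_fst_mul_apply {g : ℝ × ℝ → ℝ} (hg : DifferentiableAt ℝ g p) (v : ℝ × ℝ) :
    fderiv ℝ (fun q => q.1 * g q) p v = p.1 * fderiv ℝ g p v + v.1 * g p := by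
  rw [fderiv_fun_mul differentiableAt_fst hg]
  simp only [fderiv_fst, _root_.add_apply, _root_.smul_apply, smul_eq_mul,
    ContinuousLinearMap.coe_fst']
  ring

theorem fderiv_fst_mul_fderiv_add_fderiv_fst_mul_fderiv {g : ℝ × ℝ → ℝ}
    (hg : ContDiffAt ℝ 2 g p) (hp : p.1 ≠ 0) :
    fderiv ℝ (fun q => q.1 * fderiv ℝ g q (1, 0)) p (1, 0)
        + fderiv ℝ (fun q => q.1 * fderiv ℝ g q (0, 1)) p (0, 1)
      = p.1 * (pdR (pdR g) p + 1 / p.1 * pdR g p + pdZ (pdZ g) p) := by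
  have hdg (v : ℝ × ℝ) : DifferentiableAt ℝ (fun q => fderiv ℝ g q v) p :=
    ((hg.fderiv_right (by norm_num)).clm_apply contDiffAt_const).differentiableAt one_ne_zero
  change _ = p.1 * (fderiv ℝ (fun q => fderiv ℝ g q (1, 0)) p (1, 0)
    + 1 / p.1 * fderiv ℝ g p (1, 0) + fderiv ℝ (fun q => fderiv ℝ g q (0, 1)) p (0, 1))
  rw [fderiv_fst_mul_apply (hdg _), fderiv_fst_mul_apply (hdg _)]
  field_simp
  ring

end HalfPlane

theorem mazur_identity_subharmonic_general
    {n : ℕ}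
    (Φ₀ Φ₁ : ℝ × ℝ → Matrix (Fin n) (Fin n) ℝ)
    (hreg₀ : ∀ i j : Fin n, ContDiffOn ℝ 2 (fun q => Φ₀ q i j) {p : ℝ × ℝ | 0 < p.1})
    (hreg₁ : ∀ i j : Fin n, ContDiffOn ℝ 2 (fun q => Φ₁ q i j) {p : ℝ × ℝ | 0 < p.1})
    (hpos₀ : ∀ p : ℝ × ℝ, 0 < p.1 → (Φ₀ p).PosDef)
    (hpos₁ : ∀ p : ℝ × ℝ, 0 < p.1 → (Φ₁ p).PosDef)
    (heq₀ : SatisfiesSigmaModelEq Φ₀)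
    (heq₁ : SatisfiesSigmaModelEq Φ₁) :
    ∀ p : ℝ × ℝ, 0 < p.1 →
      0 ≤ pdR (pdR fun q => Matrix.trace ((Φ₀ q)⁻¹ * Φ₁ q)) p +
          (1 / p.1) * pdR (fun q => Matrix.trace ((Φ₀ q)⁻¹ * Φ₁ q)) p +
          pdZ (pdZ fun q => Matrix.trace ((Φ₀ q)⁻¹ * Φ₁ q)) p := by
  intro p hp
  have hU : {q : ℝ × ℝ | 0 < q.1} ∈ 𝓝 p := (isOpen_lt continuous_const continuous_fst).mem_nhds hp
  have h₀ : ContDiffAt ℝ 2 Φ₀ p := (Matrix.contDiffOn_of_entries hreg₀).contDiffAt hU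
  have h₁ : ContDiffAt ℝ 2 Φ₁ p := (Matrix.contDiffOn_of_entries hreg₁).contDiffAt hU
  have hpos₀' : ∀ᶠ q in 𝓝 p, (Φ₀ q).PosDef := eventually_of_mem hU hpos₀
  have hpos₁' : ∀ᶠ q in 𝓝 p, (Φ₁ q).PosDef := eventually_of_mem hU hpos₁
  have hR := trace_inv_mul_mul_fderiv_smul_sigmaCurrent_sub_le h₀ h₁ hpos₀' hpos₁'
    differentiableAt_fst hp.le (1, 0)
  have hZ := trace_inv_mul_mul_fderiv_smul_sigmaCurrent_sub_le h₀ h₁ hpos₀' hpos₁'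
    differentiableAt_fst hp.le (0, 1)
  have hfield := congrArg (fun D => ((Φ₀ p)⁻¹ * Φ₁ p * D).trace) (congrArg₂ (· - ·)
    (heq₁.fderiv_fst_smul_sigmaCurrent h₁ (hpos₁ p hp).isUnit hp)
    (heq₀.fderiv_fst_smul_sigmaCurrent h₀ (hpos₀ p hp).isUnit hp))
  simp only [add_sub_add_comm, mul_add, trace_add, sub_self, mul_zero, trace_zero] at hfield
  refine nonneg_of_mul_nonneg_right ?_ hp
  rw [← fderiv_fst_mul_fderiv_add_fderiv_fst_mul_fderiv
    (h₀.trace_inv_mul h₁ (hpos₀ p hp).isUnit) hp.ne']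
  linarith

/-- The Mazur identity: for two symmetric positive definite solutions `Φ₀, Φ₁`
of the reduced sigma-model equation on the upper half-plane, the function
`σ = Tr(Φ₀⁻¹ Φ₁)` satisfies `∂²_r σ + (1/r) ∂_r σ + ∂²_z σ ≥ 0` there. -/
theorem mazur_identity_subharmonic
    {n : ℕ} (hn : 1 ≤ n)
    (Φ₀ Φ₁ : ℝ × ℝ → Matrix (Fin n) (Fin n) ℝ)
    (hreg₀ : ∀ i j : Fin n, ContDiffOn ℝ 2 (fun q => Φ₀ q i j) {p : ℝ × ℝ | 0 < p.1})
    (hreg₁ : ∀ i j : Fin n, ContDiffOn ℝ 2 (fun q => Φ₁ q i j) {p : ℝ × ℝ | 0 < p.1})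
    (hpos₀ : ∀ p : ℝ × ℝ, 0 < p.1 → (Φ₀ p).PosDef)
    (hpos₁ : ∀ p : ℝ × ℝ, 0 < p.1 → (Φ₁ p).PosDef)
    (heq₀ : SatisfiesSigmaModelEq Φ₀)
    (heq₁ : SatisfiesSigmaModelEq Φ₁) :
    ∀ p : ℝ × ℝ, 0 < p.1 →
      0 ≤ pdR (pdR fun q => Matrix.trace ((Φ₀ q)⁻¹ * Φ₁ q)) p +
          (1 / p.1) * pdR (fun q => Matrix.trace ((Φ₀ q)⁻¹ * Φ₁ q)) p +
          pdZ (pdZ fun q => Matrix.trace ((Φ₀ q)⁻¹ * Φ₁ q)) p :=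
  mazur_identity_subharmonic_general Φ₀ Φ₁ hreg₀ hreg₁ hpos₀ hpos₁ heq₀ heq₁
end
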